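/- Let A be an anti-commutative algebra over a field F. Then A is a CB-algebra if and only if A is anti-associative, i.e., (x·y)·z = -x·(y·z) for all x, y, z ∈ A. -/

import Mathlib

/-!
Applied to `x·x = 0`, the CB condition says that for each `c` the bilinear map
`(a, b) ↦ (a·c)·b` is alternating, hence skew: `(x·y)·z = -(z·y)·x = (y·z)·x = -x·(y·z)`.
Conversely, anti-associativity and skewness give `(x·z)·y = (z·y)·x = -z·(y·x)`,
which vanishes when `x·y = 0`.
-/

namespace LinearMap

variable {R M : Type*} [CommSemiring R] [AddCommGroup M] [Module R M] {mul : M →ₗ[R] M →ₗ[R] M}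

theorem isAlt_comp_flip_of_cb (hac : mul.IsAlt)
    (hcb : ∀ x y, mul x y = 0 → ∀ z, mul (mul x z) y = 0) (c : M) :
    (mul ∘ₗ mul.flip c).IsAlt :=
  fun a => hcb a a (hac a) c

theorem anti_assoc_of_cb (hac : mul.IsAlt)
    (hcb : ∀ x y, mul x y = 0 → ∀ z, mul (mul x z) y = 0) (x y z : M) :
    mul (mul x y) z = -mul x (mul y z) :=
  calc mul (mul x y) z = -mul (mul z y) x := ((isAlt_comp_flip_of_cb hac hcb y).neg z x).symm
    _ = mul (mul y z) x := by rw [← hac.neg y z, map_neg, neg_apply, neg_neg]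
    _ = -mul x (mul y z) := (hac.neg x _).symm

theorem cb_of_anti_assoc (hac : mul.IsAlt)
    (hassoc : ∀ x y z, mul (mul x y) z = -mul x (mul y z)) {x y : M} (hxy : mul x y = 0) (z : M) :
    mul (mul x z) y = 0 :=
  calc mul (mul x z) y = mul (mul z y) x := by rw [hassoc, hac.neg]
    _ = 0 := by rw [hassoc, hac.eq_iff.mp hxy, map_zero, neg_zero]

end LinearMap

theorem stmt_0 (F : Type*) [Field F] (A : Type*) [AddCommGroup A] [Module F A]
    (mul : A →ₗ[F] A →ₗ[F] A)
    (hac : ∀ x : A, mul x x = 0) :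
    (∀ x y : A, mul x y = 0 → ∀ z : A, mul (mul x z) y = 0) ↔
      (∀ x y z : A, mul (mul x y) z = - mul x (mul y z)) :=
  ⟨LinearMap.anti_assoc_of_cb hac, fun hassoc _ _ => LinearMap.cb_of_anti_assoc hac hassoc⟩
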